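/- In a Heinlein wall of size 2r, no set of at most r edges meets every (a*–b*, c*–d*) linkage; that is, for every edge set U with |U| ≤ r, the graph W − U still contains a vertex-disjoint union of an a*–b* path and a c*–d* path. -/

import Mathlib

/-! Since `|U| ≤ r < 2r` and the edge sets of the `2r` wall paths `P^k`, each taken together
with its bottleneck edge `z_k z_{k+1}`, are pairwise disjoint, `U` misses one of them entirely;
that `P^k` is the `a*`–`b*` path. For every `j ≠ k` the `2r` detours
`z_j, u^j_{2i}, u^j_{2i+1}, z_{j+1}` are pairwise edge-disjoint, so `U` misses one of them too;
these detours and the free edge `z_k z_{k+1}` join `c*` to `d*` outside `P^k`. -/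

/-- Vertices of a Heinlein wall of size `r`: path vertices `u j i` (path `j`,
position `i`, both 0-based), bottleneck vertices `z t` (`t = 0, …, r`), and the
terminals `a`, `b`.  We write `c = z 0` and `d = z r`. -/
inductive HWVert (r : ℕ) where
  | u : Fin r → Fin (2 * r) → HWVert r
  | z : Fin (r + 1) → HWVert r
  | a : HWVert r
  | b : HWVert r
deriving DecidableEq

/-- The defining relation of the Heinlein wall (paper 1-based indices translated
to 0-based ones): `u j i — u j (i+1)`; `z t — u j i` for `i` even iff `t = j`
and for `i` odd iff `t = j + 1`; `z t — z (t+1)`; `a — u j 0`; `b — u j (2r-1)`. -/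
def HWRel (r : ℕ) : HWVert r → HWVert r → Prop := fun x y =>
  match x, y with
  | .u j i, .u j' i' => j = j' ∧ i'.val = i.val + 1
  | .z t, .u j i => (i.val % 2 = 0 ∧ t.val = j.val) ∨ (i.val % 2 = 1 ∧ t.val = j.val + 1)
  | .z t, .z t' => t'.val = t.val + 1
  | .a, .u _ i => i.val = 0
  | .b, .u _ i => i.val = 2 * r - 1
  | _, _ => False

/-- The Heinlein wall of size `r`. -/
def HW (r : ℕ) : SimpleGraph (HWVert r) := SimpleGraph.fromRel (HWRel r)

/-- An (`a*`–`b*`, `c*`–`d*`) linkage in the Heinlein wall of size `r`: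
a vertex-disjoint union of an `a*`–`b*` path and a `c*`–`d*` path
(recall `c* = z 0` and `d* = z r`). -/
structure HWLinkage (r : ℕ) where
  p : (HW r).Walk .a .b
  q : (HW r).Walk (.z 0) (.z (Fin.last r))
  hp : p.IsPath
  hq : q.IsPath
  disj : ∀ x, x ∈ p.support → x ∉ q.support

namespace SimpleGraph
variable {V : Type*} {G : SimpleGraph V}

theorem reachable_of_reachable_succ {m : ℕ} (f : Fin m → V)
    (h : ∀ (i : ℕ) (hi : i + 1 < m), G.Reachable (f ⟨i, by omega⟩) (f ⟨i + 1, hi⟩))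
    (i j : Fin m) : G.Reachable (f i) (f j) := by
  have from_zero : ∀ (l : ℕ) (hl : l < m),
      G.Reachable (f ⟨0, by omega⟩) (f ⟨l, hl⟩) := by
    intro l hl
    induction l with
    | zero => rfl
    | succ l ih => exact (ih (by omega)).trans (h l hl)
  exact (from_zero i i.isLt).symm.trans (from_zero j j.isLt)

theorem induce_deleteEdges_adj {U : Set (Sym2 V)} {S : Set V} {x y : S} :
    ((G.deleteEdges U).induce S).Adj x y ↔ G.Adj x y ∧ s(x.1, y.1) ∉ U := by
  simp

theorem exists_isPath_of_reachable_induce_deleteEdges {U : Set (Sym2 V)} {S : Set V}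
    {s t : V} {hs : s ∈ S} {ht : t ∈ S}
    (h : ((G.deleteEdges U).induce S).Reachable ⟨s, hs⟩ ⟨t, ht⟩) :
    ∃ p : G.Walk s t,
      p.IsPath ∧ (∀ x ∈ p.support, x ∈ S) ∧ ∀ e ∈ p.edges, e ∉ U := by
  obtain ⟨p, hp⟩ := h.exists_isPath
  let f : (G.deleteEdges U).induce S →g G :=
    (Hom.ofLE (G.deleteEdges_le U)).comp (Embedding.induce S).toHom
  -- `f ⟨s, hs⟩` is `s` only up to unfolding, so the walk is built at these endpoints first.
  have : ∃ q : G.Walk (f ⟨s, hs⟩) (f ⟨t, ht⟩),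
      q.IsPath ∧ (∀ x ∈ q.support, x ∈ S) ∧ ∀ e ∈ q.edges, e ∉ U := by
    refine ⟨p.map f, hp.map Subtype.val_injective, ?_, ?_⟩
    · rw [Walk.support_map]
      intro x hx
      obtain ⟨y, -, rfl⟩ := List.mem_map.mp hx
      exact y.2
    · rw [Walk.edges_map]
      intro e he
      obtain ⟨e', he', rfl⟩ := List.mem_map.mp he
      induction e' using Sym2.ind with
      | h x y =>
        exact (induce_deleteEdges_adj.mp (p.edges_subset_edgeSet he')).2
  exact this

end SimpleGraph

open Function in
theorem exists_disjoint_of_card_lt {ι α : Type*} [Fintype ι] {S : ι → Set α}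
    (hS : Pairwise (Disjoint on S)) {U : Finset α} (hU : U.card < Fintype.card ι) :
    ∃ i, Disjoint (S i) U := by
  by_contra! h
  choose f hfS hfU using fun i => Set.not_disjoint_iff.mp (h i)
  obtain ⟨i, j, hij, hfij⟩ :=
    Fintype.exists_ne_map_eq_of_card_lt (fun i => (⟨f i, hfU i⟩ : U)) (by simpa using hU)
  have hfij : f i = f j := congrArg Subtype.val hfij
  exact Set.disjoint_left.mp (hS hij) (hfS i) (hfij ▸ hfS j)

namespace HW
open Function

variable {n : ℕ}

def evenPos (i : Fin n) : Fin (2 * n) := ⟨2 * i, by omega⟩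
def oddPos (i : Fin n) : Fin (2 * n) := ⟨2 * i + 1, by omega⟩

def pathVerts (k : Fin n) : Set (HWVert n) := {x | x = .a ∨ x = .b ∨ ∃ i, x = .u k i}

@[simp]
theorem mem_pathVerts {k : Fin n} {x : HWVert n} :
    x ∈ pathVerts k ↔ x = .a ∨ x = .b ∨ ∃ i, x = .u k i :=
  Iff.rfl

def pathEdges (k : Fin n) : Set (Sym2 (HWVert n)) :=
  insert s(.z k.castSucc, .z k.succ) ((HW n).edgeSet ∩ (pathVerts k).sym2)

def detourEdges (j i : Fin n) : Set (Sym2 (HWVert n)) :=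
  {s(.z j.castSucc, .u j (evenPos i)), s(.u j (evenPos i), .u j (oddPos i)),
    s(.u j (oddPos i), .z j.succ)}

theorem pairwise_disjoint_detourEdges (j : Fin n) : Pairwise (Disjoint on (detourEdges j)) := by
  intro i i' hii'
  simp only [onFun, detourEdges, Set.disjoint_left]
  simp [evenPos, oddPos, Fin.ext_iff] at *
  omega

theorem detourEdges_subset_edgeSet (j i : Fin n) : detourEdges j i ⊆ (HW n).edgeSet := by
  simp [detourEdges, Set.insert_subset_iff, HW, HWRel, evenPos, oddPos]

theorem eq_a_or_eq_b_of_mem_pathVerts {k k' : Fin n} (hkk' : k ≠ k') {x : HWVert n}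
    (hx : x ∈ pathVerts k) (hx' : x ∈ pathVerts k') : x = .a ∨ x = .b := by
  rcases hx with hx | hx | ⟨i, rfl⟩
  · exact .inl hx
  · exact .inr hx
  · simp [hkk'] at hx'

theorem not_adj_of_terminals {x y : HWVert n} (hx : x = .a ∨ x = .b) (hy : y = .a ∨ y = .b) :
    ¬ (HW n).Adj x y := by
  rcases hx with rfl | rfl <;> rcases hy with rfl | rfl <;> simp [HW, HWRel]

theorem pairwise_disjoint_pathEdges : Pairwise (Disjoint on (pathEdges (n := n))) := by
  intro k k' hkk'
  simp only [onFun, pathEdges, Set.disjoint_left]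
  rintro e (rfl | ⟨he, hek⟩) (he' | ⟨he', hek'⟩)
  · simp only [Sym2.eq, Sym2.rel_iff', Prod.mk.injEq, HWVert.z.injEq, Fin.ext_iff,
      Fin.val_castSucc, Fin.val_succ, Nat.add_right_cancel_iff, and_self, Prod.swap_prod_mk] at he'
    omega
  · simp at hek'
  · simp [he'] at hek
  · induction e using Sym2.ind with
    | h x y =>
      rw [Set.mk_mem_sym2_iff] at hek hek'
      exact not_adj_of_terminals (eq_a_or_eq_b_of_mem_pathVerts hkk' hek.1 hek'.1)
        (eq_a_or_eq_b_of_mem_pathVerts hkk' hek.2 hek'.2) he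

variable {U : Set (Sym2 (HWVert n))} {k : Fin n}

theorem induce_pathVerts_adj (hk : Disjoint (pathEdges k) U) {x y : HWVert n}
    (hx : x ∈ pathVerts k) (hy : y ∈ pathVerts k) (hxy : (HW n).Adj x y) :
    (((HW n).deleteEdges U).induce (pathVerts k)).Adj ⟨x, hx⟩ ⟨y, hy⟩ :=
  SimpleGraph.induce_deleteEdges_adj.mpr
    ⟨hxy, Set.disjoint_left.mp hk (Set.mem_insert_of_mem _ ⟨hxy, hx, hy⟩)⟩

theorem reachable_a_b (hk : Disjoint (pathEdges k) U) :
    (((HW n).deleteEdges U).induce (pathVerts k)).Reachable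
      ⟨.a, by simp⟩ ⟨.b, by simp⟩ := by
  have hn : 0 < n := k.pos
  let f : Fin (2 * n) → pathVerts k := fun i => ⟨.u k i, by simp⟩
  have along_path := SimpleGraph.reachable_of_reachable_succ f
    (fun _ _ => (induce_pathVerts_adj hk _ _ (by simp [HW, HWRel])).reachable)
    ⟨0, by omega⟩ ⟨2 * n - 1, by omega⟩
  refine .trans ?_ (along_path.trans ?_)
  · exact (induce_pathVerts_adj hk _ _ (by simp [HW, HWRel])).reachable
  · exact (induce_pathVerts_adj hk _ _ (by simp [HW, HWRel])).reachable

theorem reachable_z_castSucc_z_succ (hk : Disjoint (pathEdges k) U)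
    (hdetour : ∀ j ≠ k, ∃ i, Disjoint (detourEdges j i) U) (j : Fin n) :
    (((HW n).deleteEdges U).induce (pathVerts k)ᶜ).Reachable
      ⟨.z j.castSucc, by simp⟩ ⟨.z j.succ, by simp⟩ := by
  by_cases hjk : j = k
  · subst hjk
    refine (SimpleGraph.induce_deleteEdges_adj.mpr ⟨?_, ?_⟩).reachable
    · simp [HW, HWRel, Fin.ext_iff]
    · exact Set.disjoint_left.mp hk (Set.mem_insert _ _)
  · obtain ⟨i, hi⟩ := hdetour j hjk
    have hz : ∀ t, HWVert.z t ∈ (pathVerts k)ᶜ := by simp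
    have hu : ∀ l, HWVert.u j l ∈ (pathVerts k)ᶜ := by simp [hjk]
    have step : ∀ {x y : HWVert n} (hx : x ∈ (pathVerts k)ᶜ) (hy : y ∈ (pathVerts k)ᶜ),
        s(x, y) ∈ detourEdges j i →
        (((HW n).deleteEdges U).induce (pathVerts k)ᶜ).Reachable ⟨x, hx⟩ ⟨y, hy⟩ :=
      fun _ _ he => (SimpleGraph.induce_deleteEdges_adj.mpr
        ⟨detourEdges_subset_edgeSet j i he, Set.disjoint_left.mp hi he⟩).reachable
    have down := step (hz j.castSucc) (hu (evenPos i)) (by simp [detourEdges])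
    have along := step (hu (evenPos i)) (hu (oddPos i)) (by simp [detourEdges])
    have up := step (hu (oddPos i)) (hz j.succ) (by simp [detourEdges])
    exact (down.trans along).trans up

theorem reachable_z_zero_z_last (hk : Disjoint (pathEdges k) U)
    (hdetour : ∀ j ≠ k, ∃ i, Disjoint (detourEdges j i) U) :
    (((HW n).deleteEdges U).induce (pathVerts k)ᶜ).Reachable
      ⟨.z 0, by simp⟩ ⟨.z (Fin.last n), by simp⟩ :=
  SimpleGraph.reachable_of_reachable_succ
    (fun t => (⟨.z t, by simp⟩ : ↥(pathVerts k)ᶜ))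
    (fun i hi => reachable_z_castSucc_z_succ hk hdetour ⟨i, by omega⟩) 0 (Fin.last n)

end HW

/-- In a Heinlein wall of size `2r` (with `r ≥ 1`), no set of at most `r` edges
meets every (`a*`–`b*`, `c*`–`d*`) linkage: for every edge set `U` with
`|U| ≤ r` there is a linkage avoiding all edges of `U`. -/
theorem heinleinWall_no_small_edge_hitting_set (r : ℕ) (hr : 1 ≤ r)
    (U : Finset (Sym2 (HWVert (2 * r)))) (hU : U.card ≤ r) :
    ∃ L : HWLinkage (2 * r),
      (∀ e ∈ L.p.edges, e ∉ U) ∧ (∀ e ∈ L.q.edges, e ∉ U) := by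
  have hU' : U.card < Fintype.card (Fin (2 * r)) := by rw [Fintype.card_fin]; omega
  obtain ⟨k, hk⟩ := exists_disjoint_of_card_lt HW.pairwise_disjoint_pathEdges hU'
  have hdetour : ∀ j ≠ k, ∃ i, Disjoint (HW.detourEdges j i) U :=
    fun j _ => exists_disjoint_of_card_lt (HW.pairwise_disjoint_detourEdges j) hU'
  obtain ⟨p, hp, hpk, hpU⟩ :=
    SimpleGraph.exists_isPath_of_reachable_induce_deleteEdges (HW.reachable_a_b hk)
  obtain ⟨q, hq, hqk, hqU⟩ := SimpleGraph.exists_isPath_of_reachable_induce_deleteEdges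
    (HW.reachable_z_zero_z_last hk hdetour)
  exact ⟨⟨p, q, hp, hq, fun x hxp hxq => hqk x hxq (hpk x hxp)⟩, hpU, hqU⟩
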